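/- Let A, B : ℝⁿ ⇉ ℝⁿ be maximally monotone, γ > 0, λ ∈ (0,2), and let T be the Douglas–Rachford operator with fixed point set W⋆ ≠ ∅. Suppose T satisfies the error bound condition dist_{W⋆}(w) ≤ μ‖w − Tw‖ for all w with dist_{W⋆}(w) ≤ dist_{W⋆}(w¹). Then the DRS iterates w^{k+1} = T w^k satisfy dist_{W⋆}(w^{k+1}) ≤ √(1 − (1/μ²)(2/λ − 1)) · dist_{W⋆}(w^k). -/
import Mathlib


open scoped RealInnerProductSpace

/-- A set-valued operator is monotone. -/
def MonotoneOp {n : ℕ} (A : EuclideanSpace ℝ (Fin n) → Set (EuclideanSpace ℝ (Fin n))) : Prop :=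
  ∀ ⦃x y u v⦄, u ∈ A x → v ∈ A y → 0 ≤ ⟪u - v, x - y⟫

/-- A set-valued operator is maximally monotone. -/
def MaximallyMonotoneOp {n : ℕ}
    (A : EuclideanSpace ℝ (Fin n) → Set (EuclideanSpace ℝ (Fin n))) : Prop :=
  MonotoneOp A ∧ ∀ x u, (∀ y v, v ∈ A y → 0 ≤ ⟪u - v, x - y⟫) → u ∈ A x

/-- Auxiliary algebraic inequality behind averagedness of the DR operator. -/
lemma drs_alg {E : Type*} [NormedAddCommGroup E] [InnerProductSpace ℝ E]
    (d p q : E) (lam : ℝ) (hl : 0 < lam) (hl2 : lam < 2)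
    (h1 : (0:ℝ) ≤ ⟪d - p, p⟫) (h2 : (0:ℝ) ≤ ⟪(2:ℝ) • p - d - q, q⟫) :
    ‖d + lam • (q - p)‖ ^ 2 ≤ ‖d‖ ^ 2 - (2 / lam - 1) * ‖lam • (p - q)‖ ^ 2 := by
  have key : ⟪d, q - p⟫ + ‖q - p‖ ^ 2 ≤ 0 := by
    simp only [inner_sub_left, inner_sub_right, real_inner_smul_left,
      real_inner_self_eq_norm_sq] at h1 h2 ⊢
    have hns : ‖q - p‖ ^ 2 = ‖q‖^2 - 2*⟪q,p⟫ + ‖p‖^2 := norm_sub_sq_real q p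
    rw [hns]
    have hc := real_inner_comm p q
    linarith
  have e1 : ‖d + lam • (q - p)‖ ^ 2
      = ‖d‖^2 + 2 * (lam * ⟪d, q - p⟫) + lam^2 * ‖q - p‖^2 := by
    rw [norm_add_sq_real, real_inner_smul_right, norm_smul]
    rw [Real.norm_eq_abs, abs_of_pos hl, mul_pow]
  have e2 : ‖lam • (p - q)‖ ^ 2 = lam^2 * ‖q - p‖^2 := by
    rw [norm_smul, Real.norm_eq_abs, abs_of_pos hl, mul_pow, norm_sub_rev]
  rw [e1, e2]
  have h3 : (2 / lam - 1) * (lam ^ 2) = 2 * lam - lam^2 := by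
    field_simp
  nlinarith [key, sq_nonneg lam]

/-- linear convergence of DRS under the error bound condition.
`JA`, `JB` are the resolvents `J_{γA}`, `J_{γB}` and `T` is the Douglas–Rachford
operator with stepsize `γ` and relaxation `λ`, with fixed point set `W⋆ ≠ ∅`. -/
theorem stmt5 {n : ℕ} (A B : EuclideanSpace ℝ (Fin n) → Set (EuclideanSpace ℝ (Fin n)))
    (hA : MaximallyMonotoneOp A) (hB : MaximallyMonotoneOp B)
    (γ lam : ℝ) (hγ : 0 < γ) (hlam : lam ∈ Set.Ioo (0 : ℝ) 2)
    (JA JB : EuclideanSpace ℝ (Fin n) → EuclideanSpace ℝ (Fin n))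
    (hJA : ∀ w, γ⁻¹ • (w - JA w) ∈ A (JA w))
    (hJB : ∀ w, γ⁻¹ • (w - JB w) ∈ B (JB w))
    (T : EuclideanSpace ℝ (Fin n) → EuclideanSpace ℝ (Fin n))
    (hT : ∀ w, T w = w + lam • (JA ((2 : ℝ) • JB w - w) - JB w))
    (Wstar : Set (EuclideanSpace ℝ (Fin n))) (hWstar : Wstar = {w | T w = w})
    (hne : Wstar.Nonempty)
    (w1 : EuclideanSpace ℝ (Fin n)) (μ : ℝ) (hμ : 0 < μ)
    (hEB : ∀ w, Metric.infDist w Wstar ≤ Metric.infDist w1 Wstar →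
      Metric.infDist w Wstar ≤ μ * ‖w - T w‖)
    (w : ℕ → EuclideanSpace ℝ (Fin n)) (hw1 : w 1 = w1)
    (hiter : ∀ k, w (k + 1) = T (w k)) :
    ∀ k, 1 ≤ k →
      Metric.infDist (w (k + 1)) Wstar ≤
        Real.sqrt (1 - (1 / μ ^ 2) * (2 / lam - 1)) * Metric.infDist (w k) Wstar := by
  obtain ⟨hl, hl2⟩ := hlam
  have hlne : lam ≠ 0 := ne_of_gt hl
  -- monotonicity inner-product facts packaged
  have hmonoIP : ∀ (Aop : EuclideanSpace ℝ (Fin n) → Set (EuclideanSpace ℝ (Fin n)))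
      (J : EuclideanSpace ℝ (Fin n) → EuclideanSpace ℝ (Fin n)),
      MonotoneOp Aop → (∀ w, γ⁻¹ • (w - J w) ∈ Aop (J w)) →
      ∀ u v, (0:ℝ) ≤ ⟪(u - J u) - (v - J v), J u - J v⟫ := by
    intro Aop J hmono hJ u v
    have h := hmono (hJ u) (hJ v)
    rw [← smul_sub, real_inner_smul_left] at h
    have hγi : (0:ℝ) < γ⁻¹ := inv_pos.mpr hγ
    nlinarith
  -- key decrease inequality w.r.t. any fixed point
  have hkey : ∀ u v, T v = v →
      ‖T u - v‖ ^ 2 ≤ ‖u - v‖ ^ 2 - (2 / lam - 1) * ‖u - T u‖ ^ 2 := by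
    intro u v hv
    have hyx' : JA ((2 : ℝ) • JB v - v) = JB v := by
      have h0 : lam • (JA ((2 : ℝ) • JB v - v) - JB v) = 0 := by
        have := (hT v).symm.trans hv
        exact (left_eq_add.mp this.symm)
      have := (smul_eq_zero.mp h0).resolve_left hlne
      exact sub_eq_zero.mp this
    have h1 := hmonoIP B JB hB.1 hJB u v
    have h2 := hmonoIP A JA hA.1 hJA ((2:ℝ) • JB u - u) ((2:ℝ) • JB v - v)
    rw [hyx'] at h2
    have h1' : (0:ℝ) ≤ ⟪(u - v) - (JB u - JB v), JB u - JB v⟫ := by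
      rwa [show (u - JB u) - (v - JB v) = (u - v) - (JB u - JB v) from by abel] at h1
    have h2' : (0:ℝ) ≤ ⟪(2:ℝ) • (JB u - JB v) - (u - v)
        - (JA ((2:ℝ) • JB u - u) - JB v), JA ((2:ℝ) • JB u - u) - JB v⟫ := by
      rwa [show ((2:ℝ) • JB u - u - JA ((2:ℝ) • JB u - u)) - ((2:ℝ) • JB v - v - JB v)
          = (2:ℝ) • (JB u - JB v) - (u - v) - (JA ((2:ℝ) • JB u - u) - JB v) from by
        module] at h2
    have h3 : T u - v = (u - v)
        + lam • ((JA ((2:ℝ) • JB u - u) - JB v) - (JB u - JB v)) := by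
      rw [hT u]; module
    have h4 : u - T u
        = lam • ((JB u - JB v) - (JA ((2:ℝ) • JB u - u) - JB v)) := by
      rw [hT u]; module
    calc ‖T u - v‖ ^ 2
        = ‖(u - v) + lam • ((JA ((2:ℝ) • JB u - u) - JB v) - (JB u - JB v))‖ ^ 2 := by
          rw [h3]
      _ ≤ ‖u - v‖ ^ 2 - (2 / lam - 1)
            * ‖lam • ((JB u - JB v) - (JA ((2:ℝ) • JB u - u) - JB v))‖ ^ 2 :=
          drs_alg (u - v) (JB u - JB v) (JA ((2:ℝ) • JB u - u) - JB v) lam hl hl2 h1' h2'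
      _ = ‖u - v‖ ^ 2 - (2 / lam - 1) * ‖u - T u‖ ^ 2 := by rw [h4]
  -- resolvents are nonexpansive, hence T continuous, hence Wstar closed
  have hlip : ∀ (Aop : EuclideanSpace ℝ (Fin n) → Set (EuclideanSpace ℝ (Fin n)))
      (J : EuclideanSpace ℝ (Fin n) → EuclideanSpace ℝ (Fin n)),
      MonotoneOp Aop → (∀ w, γ⁻¹ • (w - J w) ∈ Aop (J w)) → Continuous J := by
    intro Aop J hmono hJ
    have : LipschitzWith 1 J := by
      refine LipschitzWith.of_dist_le_mul fun u v => ?_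
      simp only [NNReal.coe_one, one_mul, dist_eq_norm]
      have h := hmonoIP Aop J hmono hJ u v
      rw [show (u - J u) - (v - J v) = (u - v) - (J u - J v) from by abel,
        inner_sub_left, real_inner_self_eq_norm_sq] at h
      have hle := real_inner_le_norm (u - v) (J u - J v)
      nlinarith [norm_nonneg (J u - J v), norm_nonneg (u - v),
        sq_nonneg (‖J u - J v‖ - ‖u - v‖)]
    exact this.continuous
  have hJAc : Continuous JA := hlip A JA hA.1 hJA
  have hJBc : Continuous JB := hlip B JB hB.1 hJB
  have hTc : Continuous T := by
    have : T = fun w => w + lam • (JA ((2 : ℝ) • JB w - w) - JB w) := funext hT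
    rw [this]; fun_prop
  have hclosed : IsClosed Wstar := by
    rw [hWstar]; exact isClosed_eq hTc continuous_id
  have hcpos : (0:ℝ) < 2 / lam - 1 := by
    have : 1 < 2 / lam := (one_lt_div hl).mpr hl2
    linarith
  -- per-step squared decrease of infDist
  have hstep : ∀ u, (Metric.infDist (T u) Wstar) ^ 2 ≤
      (Metric.infDist u Wstar) ^ 2 - (2 / lam - 1) * ‖u - T u‖ ^ 2 := by
    intro u
    obtain ⟨v, hvW, hvd⟩ := hclosed.exists_infDist_eq_dist hne u
    have hv : T v = v := by rw [hWstar] at hvW; exact hvW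
    have h1 : Metric.infDist (T u) Wstar ≤ ‖T u - v‖ := by
      rw [← dist_eq_norm]; exact Metric.infDist_le_dist_of_mem hvW
    have h1' : (Metric.infDist (T u) Wstar) ^ 2 ≤ ‖T u - v‖ ^ 2 :=
      pow_le_pow_left₀ Metric.infDist_nonneg h1 2
    have h2 := hkey u v hv
    rw [hvd, dist_eq_norm]
    linarith
  have hsqle : ∀ a b : ℝ, 0 ≤ a → 0 ≤ b → a ^ 2 ≤ b ^ 2 → a ≤ b := fun a b ha hb h =>
    (pow_le_pow_iff_left₀ ha hb two_ne_zero).mp h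
  -- Fejér monotonicity
  have hmono : ∀ u, Metric.infDist (T u) Wstar ≤ Metric.infDist u Wstar := by
    intro u
    have h := hstep u
    refine hsqle _ _ Metric.infDist_nonneg Metric.infDist_nonneg ?_
    nlinarith [sq_nonneg ‖u - T u‖]
  -- distances stay below the initial one
  have hD1 : ∀ k, 1 ≤ k → Metric.infDist (w k) Wstar ≤ Metric.infDist w1 Wstar := by
    intro k hk
    induction k with
    | zero => omega
    | succ m ih =>
      rcases Nat.eq_or_lt_of_le hk with h | h
      · rw [show m + 1 = 1 by omega, hw1]
      · have hm : 1 ≤ m := by omega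
        calc Metric.infDist (w (m + 1)) Wstar
            = Metric.infDist (T (w m)) Wstar := by rw [hiter]
          _ ≤ Metric.infDist (w m) Wstar := hmono (w m)
          _ ≤ Metric.infDist w1 Wstar := ih hm
  intro k hk
  have hDk0 : 0 ≤ Metric.infDist (w k) Wstar := Metric.infDist_nonneg
  have hDk10 : 0 ≤ Metric.infDist (w (k + 1)) Wstar := Metric.infDist_nonneg
  have hEBk : Metric.infDist (w k) Wstar ≤ μ * ‖w k - T (w k)‖ := hEB (w k) (hD1 k hk)
  have hsq : Metric.infDist (w (k + 1)) Wstar ^ 2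
      ≤ (1 - 1 / μ ^ 2 * (2 / lam - 1)) * Metric.infDist (w k) Wstar ^ 2 := by
    have h := hstep (w k)
    rw [← hiter k] at h
    have hn : Metric.infDist (w k) Wstar ^ 2 / μ ^ 2 ≤ ‖w k - w (k + 1)‖ ^ 2 := by
      rw [hiter k, div_le_iff₀ (by positivity)]
      nlinarith [norm_nonneg (w k - T (w k))]
    have h2 : Metric.infDist (w (k + 1)) Wstar ^ 2 ≤ Metric.infDist (w k) Wstar ^ 2
        - (2 / lam - 1) * (Metric.infDist (w k) Wstar ^ 2 / μ ^ 2) := by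
      nlinarith
    calc Metric.infDist (w (k + 1)) Wstar ^ 2
        ≤ Metric.infDist (w k) Wstar ^ 2
          - (2 / lam - 1) * (Metric.infDist (w k) Wstar ^ 2 / μ ^ 2) := h2
      _ = (1 - 1 / μ ^ 2 * (2 / lam - 1)) * Metric.infDist (w k) Wstar ^ 2 := by
          field_simp
  rcases eq_or_lt_of_le hDk0 with hz | hz
  · have h0 : Metric.infDist (w (k + 1)) Wstar ^ 2 ≤ 0 := by
      rw [← hz] at hsq; simpa using hsq
    have hz1 : Metric.infDist (w (k + 1)) Wstar = 0 :=
      pow_eq_zero_iff two_ne_zero |>.mp (le_antisymm h0 (sq_nonneg _))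
    rw [hz1, ← hz, mul_zero]
  · have hcoef : 0 ≤ 1 - 1 / μ ^ 2 * (2 / lam - 1) := by
      nlinarith [sq_nonneg (Metric.infDist (w (k + 1)) Wstar), pow_pos hz 2]
    have h1 : Metric.infDist (w (k + 1)) Wstar
        ≤ Real.sqrt ((1 - 1 / μ ^ 2 * (2 / lam - 1)) * Metric.infDist (w k) Wstar ^ 2) := by
      rw [← Real.sqrt_sq hDk10]
      exact Real.sqrt_le_sqrt hsq
    rwa [Real.sqrt_mul hcoef, Real.sqrt_sq hDk0] at h1
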